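/- arXiv:0911.1984 — 3 statements merged into one kernel-verified Lean document; each statement's English description precedes it below -/
import Mathlib

section
/- Let T be an ergodic measure-preserving transformation of a probability space (X, μ), and let f ∈ L¹(X, μ) with ∫ f dμ = 0. Define the Birkhoff sums Sₙ(f,x) = f(x) + f(Tx) + ... + f(Tⁿ⁻¹x). Then either Sₙ(f,x) is unbounded from below for μ-almost every x ∈ X, or f is a measurable coboundary, i.e. there exists a measurable function g with f(x) = g(x) − g(Tx) for μ-almost every x. -/
/-! If the Birkhoff sums `Sₙ f` are bounded below on some set, that set is `T`-invariant, so by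
ergodicity the sums are either a.e. unbounded below or a.e. bounded below. In the latter case
`m = infₙ≥₀ Sₙ f` is finite a.e. and satisfies `m = min 0 (f + m ∘ T)`, i.e.
`f = m - m ∘ T + p` with `0 ≤ p ≤ |f|`. An integrable coboundary `m - m ∘ T` has integral zero even
when `m` itself is not integrable, so `∫ p = ∫ f = 0` and `p` vanishes a.e. -/

open MeasureTheory Filter Set

namespace MeasureTheory.MeasurePreserving

variable {X : Type*} [MeasurableSpace X] {μ : Measure X} {T : X → X}

lemma integral_comp_of_aestronglyMeasurable (hT : MeasurePreserving T μ μ) {g : X → ℝ}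
    (hg : AEStronglyMeasurable g μ) : ∫ x, g (T x) ∂μ = ∫ x, g x ∂μ := by
  rw [← integral_map hT.aemeasurable (by rwa [hT.map_eq]), hT.map_eq]

lemma integral_sub_comp_eq_zero [IsFiniteMeasure μ] (hT : MeasurePreserving T μ μ) {u : X → ℝ}
    (hu : AEStronglyMeasurable u μ) (hint : Integrable (fun x => u x - u (T x)) μ) :
    ∫ x, (u x - u (T x)) ∂μ = 0 := by
  -- `u` need not be integrable, so truncate it at level `M`; truncation is 1-Lipschitz, hence
  -- dominated convergence applies with the bound `|u x - u (T x)|`.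
  let clamp (M : ℕ) (a : ℝ) : ℝ := max (min a M) (-M)
  have clamp_lipschitz (M : ℕ) (a b : ℝ) : |clamp M a - clamp M b| ≤ |a - b| :=
    (abs_max_sub_max_le_abs _ _ _).trans <| (abs_min_sub_min_le_max _ _ _ _).trans <| by simp
  have clamp_eventually_eq (a : ℝ) : ∀ᶠ M in atTop, clamp M a = a := by
    filter_upwards [eventually_ge_atTop ⌈|a|⌉₊] with M hM
    have ha : |a| ≤ M := (Nat.le_ceil _).trans (Nat.cast_le.2 hM)
    simp [clamp, (abs_le.1 ha).1, (abs_le.1 ha).2]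
  have clamp_meas (M : ℕ) : AEStronglyMeasurable (fun x => clamp M (u x)) μ :=
    (hu.inf aestronglyMeasurable_const).sup aestronglyMeasurable_const
  have integral_clamp (M : ℕ) : ∫ x, (clamp M (u x) - clamp M (u (T x))) ∂μ = 0 := by
    have hclamp : Integrable (fun x => clamp M (u x)) μ :=
      .of_bound (clamp_meas M) M <| ae_of_all _ fun x =>
        abs_le.2 ⟨le_max_right _ _, max_le (min_le_right _ _) (by simp)⟩
    have hclampT : Integrable (fun x => clamp M (u (T x))) μ :=
      hT.integrable_comp_of_integrable hclamp
    rw [integral_sub hclamp hclampT, hT.integral_comp_of_aestronglyMeasurable (clamp_meas M), sub_self]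
  have hlim := tendsto_integral_of_dominated_convergence (fun x => |u x - u (T x)|)
    (F := fun M x => clamp M (u x) - clamp M (u (T x))) (f := fun x => u x - u (T x))
    (fun M => (clamp_meas M).sub ((clamp_meas M).comp_measurePreserving hT)) hint.abs
    (fun M => ae_of_all _ fun x => clamp_lipschitz M _ _)
    (ae_of_all _ fun x => tendsto_const_nhds.congr' <|
      ((clamp_eventually_eq (u x)).and (clamp_eventually_eq (u (T x)))).mono fun M hM => by
        simp only [hM.1, hM.2])
  simp only [integral_clamp] at hlim
  exact tendsto_nhds_unique hlim tendsto_const_nhds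

end MeasureTheory.MeasurePreserving

section BirkhoffSum

variable {α : Type*} (T : α → α) (g : α → ℝ) (x : α)

/-- Equals `0`, the junk value of `⨅` on `ℝ`, where the sums are unbounded below. -/
noncomputable def birkhoffSumInf : ℝ := ⨅ n, birkhoffSum T g n x

lemma range_birkhoffSum_eq_insert :
    range (fun n => birkhoffSum T g n x) =
      insert 0 (range fun n => g x + birkhoffSum T g n (T x)) := by
  rw [← Nat.range_of_succ, singleton_union]
  simp [Function.comp_def, birkhoffSum_succ']

lemma birkhoffSumInf_eq_min (h : BddBelow (range fun n => birkhoffSum T g n (T x))) :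
    birkhoffSumInf T g x = min 0 (g x + birkhoffSumInf T g (T x)) := by
  rw [birkhoffSumInf, birkhoffSumInf, add_ciInf h, iInf, range_birkhoffSum_eq_insert T g x,
    csInf_insert _ (range_nonempty _)]
  · rfl
  · rwa [← (OrderIso.addLeft (g x)).bddBelow_image, ← range_comp] at h

lemma birkhoffSumInf_nonpos : birkhoffSumInf T g x ≤ 0 := by
  by_cases h : BddBelow (range fun n => birkhoffSum T g n x)
  · simpa [birkhoffSumInf] using ciInf_le h 0
  · rw [birkhoffSumInf, Real.iInf_of_not_bddBelow h]

lemma bddBelow_range_birkhoffSum_apply_iff :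
    BddBelow (range fun n => birkhoffSum T g n (T x)) ↔
      BddBelow (range fun n => birkhoffSum T g n x) := by
  rw [range_birkhoffSum_eq_insert T g x, bddBelow_insert,
    ← (OrderIso.addLeft (g x)).bddBelow_image, ← range_comp]
  rfl

lemma bddBelow_range_birkhoffSum_succ_iff :
    BddBelow (range fun n => birkhoffSum T g (n + 1) x) ↔
      BddBelow (range fun n => birkhoffSum T g n x) := by
  simp_rw [birkhoffSum_succ', range_birkhoffSum_eq_insert, bddBelow_insert]

end BirkhoffSum

section Measurability

variable {X : Type*} [MeasurableSpace X] {T : X → X} {f : X → ℝ}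

lemma Measurable.birkhoffSum (hf : Measurable f) (hT : Measurable T) (n : ℕ) :
    Measurable (birkhoffSum T f n) :=
  Finset.measurable_sum _ fun k _ => hf.comp (hT.iterate k)

lemma Measurable.birkhoffSumInf (hf : Measurable f) (hT : Measurable T) :
    Measurable (birkhoffSumInf T f) :=
  Measurable.iInf fun n => hf.birkhoffSum hT n

end Measurability

section Coboundary

variable {X : Type*} [MeasurableSpace X] {μ : Measure X} {T : X → X} {f : X → ℝ}

lemma PreErgodic.ae_bddBelow_birkhoffSum_or_ae_not (hT : PreErgodic T μ) (hTm : Measurable T)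
    (hf : Measurable f) :
    (∀ᵐ x ∂μ, BddBelow (range fun n => birkhoffSum T f n x)) ∨
      ∀ᵐ x ∂μ, ¬BddBelow (range fun n => birkhoffSum T f n x) :=
  hT.ae_mem_or_ae_notMem (measurableSet_bddBelow_range fun n => hf.birkhoffSum hTm n) <|
    Set.ext fun x => bddBelow_range_birkhoffSum_apply_iff T f x

namespace MeasureTheory.MeasurePreserving

lemma ae_eq_birkhoffSumInf_sub_comp [IsFiniteMeasure μ] (hT : MeasurePreserving T μ μ)
    (hfm : Measurable f) (hf : Integrable f μ) (hmean : ∫ x, f x ∂μ = 0)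
    (hbdd : ∀ᵐ x ∂μ, BddBelow (range fun n => birkhoffSum T f n x)) :
    f =ᵐ[μ] fun x => birkhoffSumInf T f x - birkhoffSumInf T f (T x) := by
  set m := birkhoffSumInf T f
  have hm : Measurable m := hfm.birkhoffSumInf hT.measurable
  set p : X → ℝ := fun x => f x + m (T x) - m x
  have hp : ∀ᵐ x ∂μ, 0 ≤ p x ∧ p x ≤ |f x| := by
    filter_upwards [hT.quasiMeasurePreserving.ae hbdd] with x hx
    have hmin : m x = min 0 (f x + m (T x)) := birkhoffSumInf_eq_min T f x hx
    have hmT : m (T x) ≤ 0 := birkhoffSumInf_nonpos T f (T x)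
    have hf_abs := le_abs_self (f x)
    rcases min_cases 0 (f x + m (T x)) with h | h <;>
      exact ⟨by simp only [p]; linarith, by simp only [p]; linarith [abs_nonneg (f x)]⟩
  have hpi : Integrable p μ :=
    hf.abs.mono' ((hfm.add (hm.comp hT.measurable)).sub hm).aestronglyMeasurable
      (by filter_upwards [hp] with x hx; rw [Real.norm_eq_abs, abs_of_nonneg hx.1]; exact hx.2)
  have hp_eq : p = fun x => f x - (m x - m (T x)) := funext fun x => by simp only [p]; ring
  have hcobi : Integrable (fun x => m x - m (T x)) μ :=
    (hf.sub hpi).congr (ae_of_all _ fun x => by simp only [p, Pi.sub_apply]; ring)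
  have hp0 : p =ᵐ[μ] 0 := by
    refine (integral_eq_zero_iff_of_nonneg_ae (hp.mono fun x hx => hx.1) hpi).1 ?_
    rw [hp_eq, integral_sub hf hcobi, hmean,
      hT.integral_sub_comp_eq_zero hm.aestronglyMeasurable hcobi, sub_zero]
  filter_upwards [hp0] with x hx
  simp only [p, Pi.zero_apply] at hx
  linarith

end MeasureTheory.MeasurePreserving

end Coboundary

theorem stmt_1 {X : Type*} [MeasurableSpace X] (μ : Measure X) [IsProbabilityMeasure μ]
    (T : X → X) (hT : Ergodic T μ) (f : X → ℝ) (hf : Integrable f μ)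
    (hmean : ∫ x, f x ∂μ = 0) :
    (∀ᵐ x ∂μ, ¬ BddBelow (Set.range fun n : ℕ =>
        ∑ k ∈ Finset.range (n + 1), f (T^[k] x))) ∨
    (∃ g : X → ℝ, Measurable g ∧ ∀ᵐ x ∂μ, f x = g x - g (T x)) := by
  obtain ⟨f', hf'm, hff'⟩ := hf.aemeasurable
  have hsum : ∀ᵐ x ∂μ, ∀ n, birkhoffSum T f n x = birkhoffSum T f' n x :=
    ae_all_iff.2 (hT.quasiMeasurePreserving.birkhoffSum_ae_eq_of_ae_eq hff')
  rcases hT.toPreErgodic.ae_bddBelow_birkhoffSum_or_ae_not hT.measurable hf'm with hbdd | hunbdd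
  · right
    refine ⟨birkhoffSumInf T f', hf'm.birkhoffSumInf hT.measurable, ?_⟩
    filter_upwards [hff', hT.ae_eq_birkhoffSumInf_sub_comp hf'm (hf.congr hff')
      (by rwa [← integral_congr_ae hff']) hbdd] with x hx hx'
    rw [hx, hx']
  · left
    filter_upwards [hunbdd, hsum] with x hx hxs
    change ¬BddBelow (range fun n => birkhoffSum T f (n + 1) x)
    simp only [hxs, bddBelow_range_birkhoffSum_succ_iff]
    exact hx
end

section
/- Let T be an ergodic measure-preserving transformation of a probability space (X, μ), f ∈ L¹(X,μ) with ∫ f dμ = 0, and suppose the set of points x for which the Birkhoff sums Sₙ(f,x) are bounded below has positive μ-measure. Then g(x) := inf_{n≥1} Sₙ(f,x) is finite μ-almost everywhere, and the function h(x) := g(Tx) − g(x) + f(x) is nonnegative μ-almost everywhere. -/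
/-!
Since `S (n + 2) x = f x + S (n + 1) (T x)`, the Birkhoff sums along `x` are bounded below exactly
when those along `T x` are, so the set where they are bounded below is `T`-invariant; it is
null-measurable, hence by ergodicity null or conull. The same identity, passed to the infimum,
gives `g x ≤ f x + g (T x)` wherever the sums are bounded below.
-/

open MeasureTheory Set

section BirkhoffSum

variable {α M : Type*} (T : α → α)

theorem bddBelow_range_birkhoffSum_succ_apply_iff [AddCommGroup M] [LinearOrder M]
    [IsOrderedAddMonoid M] (f : α → M) (x : α) :
    BddBelow (range fun n => birkhoffSum T f (n + 1) (T x)) ↔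
      BddBelow (range fun n => birkhoffSum T f (n + 1) x) := by
  constructor
  · rintro ⟨b, hb⟩
    refine ⟨min (f x) (f x + b), ?_⟩
    rintro _ ⟨_ | n, rfl⟩
    · simp
    · dsimp only
      rw [birkhoffSum_succ' T f (n + 1)]
      exact min_le_of_right_le (add_le_add_right (hb ⟨n, rfl⟩) _)
  · rintro ⟨b, hb⟩
    refine ⟨b - f x, ?_⟩
    rintro _ ⟨n, rfl⟩
    have h : b ≤ birkhoffSum T f (n + 2) x := hb ⟨n + 1, rfl⟩
    rw [birkhoffSum_succ'] at h
    exact sub_le_iff_le_add'.2 h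

theorem iInf_birkhoffSum_succ_le_add_iInf_birkhoffSum_succ_apply
    [ConditionallyCompleteLinearOrder M] [AddCommGroup M] [IsOrderedAddMonoid M]
    (f : α → M) {x : α} (hx : BddBelow (range fun n => birkhoffSum T f (n + 1) x)) :
    ⨅ n, birkhoffSum T f (n + 1) x ≤ f x + ⨅ n, birkhoffSum T f (n + 1) (T x) := by
  rw [← sub_le_iff_le_add']
  refine le_ciInf fun n => sub_le_iff_le_add'.2 ?_
  rw [← birkhoffSum_succ']
  exact ciInf_le hx (n + 1)

end BirkhoffSum

section Measurability

variable {α : Type*} [MeasurableSpace α] {μ : Measure α}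

theorem nullMeasurableSet_setOf_bddBelow_range {ι : Type*} [Countable ι] {u : ι → α → ℝ}
    (hu : ∀ i, AEMeasurable (u i) μ) :
    NullMeasurableSet {x | BddBelow (range fun i => u i x)} μ := by
  have hset :
      {x | BddBelow (range fun i => u i x)} = ⋃ m : ℤ, ⋂ i, {x | (m : ℝ) ≤ u i x} := by
    ext x
    simp only [mem_ofPred_eq, mem_iUnion, mem_iInter, bddBelow_def, forall_mem_range]
    constructor
    · rintro ⟨b, hb⟩
      exact ⟨⌊b⌋, fun i => (Int.floor_le b).trans (hb i)⟩
    · rintro ⟨m, hm⟩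
      exact ⟨m, hm⟩
  rw [hset]
  exact .iUnion fun m => .iInter fun i => nullMeasurableSet_le aemeasurable_const (hu i)

theorem aestronglyMeasurable_birkhoffSum {M : Type*} [AddCommMonoid M] [TopologicalSpace M]
    [ContinuousAdd M] {T : α → α} {f : α → M} (hT : Measure.QuasiMeasurePreserving T μ μ)
    (hf : AEStronglyMeasurable f μ) (n : ℕ) :
    AEStronglyMeasurable (birkhoffSum T f n) μ :=
  Finset.aestronglyMeasurable_fun_sum _ fun k _ => hf.comp_quasiMeasurePreserving (hT.iterate k)

theorem QuasiErgodic.ae_bddBelow_birkhoffSum_of_measure_pos {T : α → α} {f : α → ℝ}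
    (hT : QuasiErgodic T μ) (hf : AEStronglyMeasurable f μ)
    (hpos : 0 < μ {x | BddBelow (range fun n => birkhoffSum T f (n + 1) x)}) :
    ∀ᵐ x ∂μ, BddBelow (range fun n => birkhoffSum T f (n + 1) x) := by
  set B := {x | BddBelow (range fun n => birkhoffSum T f (n + 1) x)}
  have hB : NullMeasurableSet B μ := nullMeasurableSet_setOf_bddBelow_range fun n =>
    (aestronglyMeasurable_birkhoffSum hT.toQuasiMeasurePreserving hf (n + 1)).aemeasurable
  have hinv : T ⁻¹' B = B := ext fun x => bddBelow_range_birkhoffSum_succ_apply_iff T f x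
  refine (hT.ae_mem_or_ae_notMem₀ hB hinv.eventuallyEq).resolve_right fun hnull => ?_
  exact hpos.ne' (measure_eq_zero_iff_ae_notMem.2 hnull)

end Measurability

theorem stmt_2_general {X : Type*} [MeasurableSpace X] (μ : Measure X)
    (T : X → X) (hT : Ergodic T μ) (f : X → ℝ) (hf : Integrable f μ)
    (S : ℕ → X → ℝ)
    (hS : ∀ n x, S n x = ∑ k ∈ Finset.range n, f (T^[k] x))
    (hpos : 0 < μ {x | BddBelow (Set.range fun n : ℕ => S (n + 1) x)}) :
    (∀ᵐ x ∂μ, BddBelow (Set.range fun n : ℕ => S (n + 1) x)) ∧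
    (∀ᵐ x ∂μ, 0 ≤ (⨅ n : ℕ, S (n + 1) (T x)) - (⨅ n : ℕ, S (n + 1) x) + f x) := by
  obtain rfl : S = birkhoffSum T f := funext₂ hS
  have hbdd := hT.quasiErgodic.ae_bddBelow_birkhoffSum_of_measure_pos hf.aestronglyMeasurable hpos
  refine ⟨hbdd, ?_⟩
  filter_upwards [hbdd] with x hx
  linarith [iInf_birkhoffSum_succ_le_add_iInf_birkhoffSum_succ_apply T f hx]

theorem stmt_2 {X : Type*} [MeasurableSpace X] (μ : Measure X) [IsProbabilityMeasure μ]
    (T : X → X) (hT : Ergodic T μ) (f : X → ℝ) (hf : Integrable f μ)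
    (hmean : ∫ x, f x ∂μ = 0)
    (S : ℕ → X → ℝ)
    (hS : ∀ n x, S n x = ∑ k ∈ Finset.range n, f (T^[k] x))
    (hpos : 0 < μ {x | BddBelow (Set.range fun n : ℕ => S (n + 1) x)}) :
    (∀ᵐ x ∂μ, BddBelow (Set.range fun n : ℕ => S (n + 1) x)) ∧
    (∀ᵐ x ∂μ, 0 ≤ (⨅ n : ℕ, S (n + 1) (T x)) - (⨅ n : ℕ, S (n + 1) x) + f x) :=
  stmt_2_general μ T hT f hf S hS hpos
end

section
/- Let T be an ergodic measure-preserving transformation of a probability space (X,μ) and suppose f = g − g∘T almost everywhere for a measurable function g finite a.e. Then for μ-almost every x there exists n ≥ 1 such that Sₙ(f,x) = g(x) − g(Tⁿx) ≤ 0. -/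
/-!
Along the orbit the sums telescope, `Sₙ(f, x) = g x - g (Tⁿ x)`, so it suffices that a.e. orbit
returns to a point where `g` is at least `g x`. Below the essential supremum of `g` this is
ergodicity: the orbit enters each set `{q < g}` of positive measure, `q` rational. At the
essential supremum it is Poincaré recurrence for the set `{essSup g ≤ g}`. The function `g` is
read in `EReal`, where the essential supremum exists even when `g` is unbounded.
-/

open MeasureTheory Filter Function

section

variable {X : Type*} [MeasurableSpace X] {μ : Measure X} {T : X → X}

theorem MeasureTheory.Measure.QuasiMeasurePreserving.ae_forall_iterate
    (hT : Measure.QuasiMeasurePreserving T μ μ) {p : X → Prop} (hp : ∀ᵐ x ∂μ, p x) :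
    ∀ᵐ x ∂μ, ∀ k, p (T^[k] x) :=
  ae_all_iff.2 fun k => (hT.iterate k).ae hp

theorem MeasureTheory.Conservative.ae_exists_iterate_mem (hT : Conservative T μ) {s : Set X}
    (hs : MeasurableSet s) : ∀ᵐ x ∂μ, x ∈ s → ∃ n, 1 ≤ n ∧ T^[n] x ∈ s := by
  filter_upwards [hT.ae_mem_imp_frequently_image_mem hs.nullMeasurableSet] with x hx hxs
  exact (hx hxs).forall_exists_of_atTop 1

namespace Ergodic

variable [IsFiniteMeasure μ]

/-- The set of points whose orbit enters `s` after time `0` is forward invariant and contains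
`T⁻¹ s`, so ergodicity makes it conull. -/
theorem ae_exists_iterate_mem (hT : Ergodic T μ) {s : Set X} (hs : MeasurableSet s)
    (h0 : μ s ≠ 0) : ∀ᵐ x ∂μ, ∃ n, 1 ≤ n ∧ T^[n] x ∈ s := by
  set B := ⋃ n : ℕ, T^[n + 1] ⁻¹' s
  have hB : MeasurableSet B :=
    .iUnion fun n => hT.measurable.iterate (n + 1) hs
  have hB_inv : T ⁻¹' B ⊆ B := by
    simp only [B, Set.preimage_iUnion, ← Set.preimage_comp, ← iterate_succ]
    exact Set.iUnion_subset fun n => Set.subset_iUnion (fun n => T^[n + 1] ⁻¹' s) (n + 1)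
  have hB_pos : μ B ≠ 0 := by
    refine ne_bot_of_le_ne_bot ?_ (measure_mono (Set.subset_iUnion _ 0))
    rwa [iterate_one, hT.toMeasurePreserving.measure_preimage hs.nullMeasurableSet]
  rcases hT.ae_empty_or_univ_of_preimage_ae_le hB.nullMeasurableSet hB_inv.eventuallyLE
    with hB_null | hB_conull
  · exact absurd (measure_congr hB_null) (by simpa using hB_pos)
  · filter_upwards [mem_ae_iff.2 (ae_eq_univ.1 hB_conull)] with x hx
    obtain ⟨n, hn⟩ := Set.mem_iUnion.1 hx
    exact ⟨n + 1, Nat.le_add_left 1 n, hn⟩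

theorem ae_exists_iterate_gt_of_lt_essSup (hT : Ergodic T μ) {g : X → EReal}
    (hg : Measurable g) {c : EReal} (hc : c < essSup g μ) :
    ∀ᵐ x ∂μ, ∃ n, 1 ≤ n ∧ c < g (T^[n] x) := by
  refine hT.ae_exists_iterate_mem (hg measurableSet_Ioi) fun h0 => hc.not_ge ?_
  exact essSup_le_of_ae_le _ <| (measure_eq_zero_iff_ae_notMem.1 h0).mono fun _ hy => not_lt.1 hy

theorem ae_exists_lt_iterate_of_lt_essSup (hT : Ergodic T μ) {g : X → EReal}
    (hg : Measurable g) :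
    ∀ᵐ x ∂μ, g x < essSup g μ → ∃ n, 1 ≤ n ∧ g x < g (T^[n] x) := by
  have h_visit : ∀ q : ℚ, ∀ᵐ x ∂μ, ((q : ℝ) : EReal) < essSup g μ →
      ∃ n, 1 ≤ n ∧ ((q : ℝ) : EReal) < g (T^[n] x) := fun q => by
    by_cases hq : ((q : ℝ) : EReal) < essSup g μ
    · exact (hT.ae_exists_iterate_gt_of_lt_essSup hg hq).mono fun _ hx _ => hx
    · exact .of_forall fun _ h => absurd h hq
  filter_upwards [ae_all_iff.2 h_visit] with x hx hlt
  obtain ⟨q, hxq, hq⟩ := EReal.exists_rat_btwn_of_lt hlt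
  obtain ⟨n, hn, hqn⟩ := hx q hq
  exact ⟨n, hn, hxq.trans hqn⟩

theorem ae_exists_le_iterate (hT : Ergodic T μ) {g : X → EReal} (hg : Measurable g) :
    ∀ᵐ x ∂μ, ∃ n, 1 ≤ n ∧ g x ≤ g (T^[n] x) := by
  filter_upwards [ae_le_essSup (f := g), hT.ae_exists_lt_iterate_of_lt_essSup hg,
    hT.toMeasurePreserving.conservative.ae_exists_iterate_mem (s := {y | essSup g μ ≤ g y})
      (hg measurableSet_Ici)] with x hx_le h_below h_at
  rcases hx_le.lt_or_eq with hlt | heq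
  · obtain ⟨n, hn, hgn⟩ := h_below hlt
    exact ⟨n, hn, hgn.le⟩
  · obtain ⟨n, hn, hgn⟩ := h_at heq.ge
    exact ⟨n, hn, hx_le.trans hgn⟩

end Ergodic

end

theorem stmt_6 {X : Type*} [MeasurableSpace X] (μ : Measure X) [IsProbabilityMeasure μ]
    (T : X → X) (hT : Ergodic T μ) (f g : X → ℝ) (hg : Measurable g)
    (hcob : ∀ᵐ x ∂μ, f x = g x - g (T x)) :
    ∀ᵐ x ∂μ, ∃ n : ℕ, 1 ≤ n ∧ ∑ k ∈ Finset.range n, f (T^[k] x) ≤ 0 := by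
  filter_upwards [hT.ae_exists_le_iterate hg.coe_real_ereal,
    hT.quasiMeasurePreserving.ae_forall_iterate hcob] with x ⟨n, hn, hle⟩ hx
  refine ⟨n, hn, ?_⟩
  calc ∑ k ∈ Finset.range n, f (T^[k] x)
      = ∑ k ∈ Finset.range n, (g (T^[k] x) - g (T^[k + 1] x)) :=
        Finset.sum_congr rfl fun k _ => by rw [hx k, iterate_succ_apply']
    _ = g x - g (T^[n] x) := Finset.sum_range_sub' _ n
    _ ≤ 0 := sub_nonpos.2 (EReal.coe_le_coe_iff.1 hle)
end
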